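/- arXiv:1412.6034 — 4 statements merged into one kernel-verified Lean document; each statement's English description precedes it below -/
import Mathlib

section
/- If an FT3S system is FT2S strongly hyperbolic, then it is FT3S strongly hyperbolic. Precisely: if for some choice of reduction parameters there exist M2 > 0 and, for each unit vector s in R^3, a Hermitian matrix H2(s) with H2(s)P2(s) = P2(s)*H2(s) and M2^{-1} I <= H2(s) <= M2 I, then there exist M3 > 0 and, for each unit s, a Hermitian matrix H3(s) with H3(s)P3(s) = P3(s)*H3(s) and M3^{-1} I <= H3(s) <= M3 I; one may take M3 = M2 and H3(s) equal to the diagonal block of H2(s) corresponding to the components (s^a d_a, v, w) after the orthogonal change of variables splitting d_a into its components parallel and orthogonal to s. -/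
open Matrix
open scoped ComplexOrder

/-- The Loewner order `A ≤ B` for complex matrices: `B - A` is positive semidefinite. -/
def loewnerLE {n : Type*} [Fintype n] (A B : Matrix n n ℂ) : Prop := (B - A).PosSemidef

/-- Index type for the FT3S state `(u, v, w)`. -/
abbrev I3 (nu nv nw : ℕ) : Type := Fin nu ⊕ (Fin nv ⊕ Fin nw)

/-- Index type for the FT2S reduction state `(u, d_a, v, w)`. -/
abbrev I2 (nu nv nw : ℕ) : Type := Fin nu ⊕ ((Fin 3 × Fin nu) ⊕ (Fin nv ⊕ Fin nw))

variable {nu nv nw : ℕ}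
  (Auu : Fin 3 → Matrix (Fin nu) (Fin nu) ℂ) (Auv : Matrix (Fin nu) (Fin nv) ℂ)
  (Bu1u : Matrix (Fin nu) (Fin nu) ℂ)
  (Avu : Fin 3 → Fin 3 → Matrix (Fin nv) (Fin nu) ℂ)
  (Avv : Fin 3 → Matrix (Fin nv) (Fin nv) ℂ)
  (Avw : Matrix (Fin nv) (Fin nw) ℂ) (Bv1u : Fin 3 → Matrix (Fin nv) (Fin nu) ℂ)
  (Awu : Fin 3 → Fin 3 → Fin 3 → Matrix (Fin nw) (Fin nu) ℂ)
  (Awv : Fin 3 → Fin 3 → Matrix (Fin nw) (Fin nv) ℂ)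
  (Aww : Fin 3 → Matrix (Fin nw) (Fin nw) ℂ)
  (Bw1u : Fin 3 → Fin 3 → Matrix (Fin nw) (Fin nu) ℂ)
  (Du : Fin 3 → Matrix (Fin nu) (Fin nu) ℂ)
  (Dbaru : Fin 3 → Fin 3 → Matrix (Fin nu) (Fin nu) ℂ)
  (DD : Fin 3 → Fin 3 → Matrix (Fin nu) (Fin nu) ℂ)
  (Dbar : Fin 3 → Fin 3 → Fin 3 → Matrix (Fin nu) (Fin nu) ℂ)
  (Dv : Fin 3 → Matrix (Fin nv) (Fin nu) ℂ)
  (Dbarv : Fin 3 → Fin 3 → Matrix (Fin nv) (Fin nu) ℂ)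
  (Dw : Fin 3 → Fin 3 → Matrix (Fin nw) (Fin nu) ℂ)
  (Dbarw : Fin 3 → Fin 3 → Fin 3 → Matrix (Fin nw) (Fin nu) ℂ)

/-- The FT3S principal symbol `P₃(s)`. -/
noncomputable def P3 (s : Fin 3 → ℝ) : Matrix (I3 nu nv nw) (I3 nu nv nw) ℂ :=
  Matrix.of fun r c =>
    match r, c with
    | Sum.inl m, Sum.inl m' => ∑ i, (s i : ℂ) * Auu i m m'
    | Sum.inl m, Sum.inr (Sum.inl q) => Auv m q
    | Sum.inl _, Sum.inr (Sum.inr _) => 0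
    | Sum.inr (Sum.inl p), Sum.inl m' => ∑ i, ∑ j, (s i : ℂ) * (s j : ℂ) * Avu i j p m'
    | Sum.inr (Sum.inl p), Sum.inr (Sum.inl q) => ∑ i, (s i : ℂ) * Avv i p q
    | Sum.inr (Sum.inl p), Sum.inr (Sum.inr t) => Avw p t
    | Sum.inr (Sum.inr t), Sum.inl m' =>
        ∑ i, ∑ j, ∑ k, (s i : ℂ) * (s j : ℂ) * (s k : ℂ) * Awu i j k t m'
    | Sum.inr (Sum.inr t), Sum.inr (Sum.inl q) =>
        ∑ i, ∑ j, (s i : ℂ) * (s j : ℂ) * Awv i j t q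
    | Sum.inr (Sum.inr t), Sum.inr (Sum.inr t') => ∑ i, (s i : ℂ) * Aww i t t'

/-- The principal symbol `P₂(s)` of the FT2S reduction with reduction parameters
`D^u, D̄^u, D, D̄, D^v, D̄^v, D^w, D̄^w`. -/
noncomputable def P2 (s : Fin 3 → ℝ) : Matrix (I2 nu nv nw) (I2 nu nv nw) ℂ :=
  Matrix.of fun r c =>
    match r, c with
    | Sum.inl m, Sum.inl m' => ∑ i, (s i : ℂ) * (Auu i + Du i) m m'
    | Sum.inl m, Sum.inr (Sum.inl (b, m')) => ∑ i, (s i : ℂ) * Dbaru i b m m'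
    | Sum.inl _, Sum.inr (Sum.inr (Sum.inl _)) => 0
    | Sum.inl _, Sum.inr (Sum.inr (Sum.inr _)) => 0
    | Sum.inr (Sum.inl (a, m)), Sum.inl m' =>
        ∑ i, (s i : ℂ) * ((if a = i then Bu1u else 0) + DD a i) m m'
    | Sum.inr (Sum.inl (a, m)), Sum.inr (Sum.inl (b, m')) =>
        ∑ i, (s i : ℂ) * ((if a = i then Auu b else 0) + Dbar a i b) m m'
    | Sum.inr (Sum.inl (a, m)), Sum.inr (Sum.inr (Sum.inl q)) => (s a : ℂ) * Auv m q
    | Sum.inr (Sum.inl _), Sum.inr (Sum.inr (Sum.inr _)) => 0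
    | Sum.inr (Sum.inr (Sum.inl p)), Sum.inl m' =>
        ∑ i, (s i : ℂ) * (Bv1u i + Dv i) p m'
    | Sum.inr (Sum.inr (Sum.inl p)), Sum.inr (Sum.inl (b, m')) =>
        ∑ i, (s i : ℂ) * (Avu i b + Dbarv i b) p m'
    | Sum.inr (Sum.inr (Sum.inl p)), Sum.inr (Sum.inr (Sum.inl q)) =>
        ∑ i, (s i : ℂ) * Avv i p q
    | Sum.inr (Sum.inr (Sum.inl p)), Sum.inr (Sum.inr (Sum.inr t)) => Avw p t
    | Sum.inr (Sum.inr (Sum.inr t)), Sum.inl m' =>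
        ∑ i, ∑ j, (s i : ℂ) * (s j : ℂ) * (Bw1u i j + Dw i j) t m'
    | Sum.inr (Sum.inr (Sum.inr t)), Sum.inr (Sum.inl (b, m')) =>
        ∑ i, ∑ j, (s i : ℂ) * (s j : ℂ) * (Awu i j b + Dbarw i j b) t m'
    | Sum.inr (Sum.inr (Sum.inr t)), Sum.inr (Sum.inr (Sum.inl q)) =>
        ∑ i, ∑ j, (s i : ℂ) * (s j : ℂ) * Awv i j t q
    | Sum.inr (Sum.inr (Sum.inr t)), Sum.inr (Sum.inr (Sum.inr t')) =>
        ∑ i, (s i : ℂ) * Aww i t t'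

/-- The isometric embedding of the components `(s^a d_a, v, w)` into the FT2S state
space (the `u`-slot is zero, the `d`-slot is `d_a = s_a x`); compressing a matrix on the
FT2S state space by this embedding yields its diagonal block corresponding to
`(s^a d_a, v, w)` in the orthogonal change of variables splitting `d_a` into components
parallel and orthogonal to the unit vector `s`. -/
noncomputable def Jcomp (s : Fin 3 → ℝ) : Matrix (I2 nu nv nw) (I3 nu nv nw) ℂ :=
  Matrix.of fun r c =>
    match r, c with
    | Sum.inr (Sum.inl (a, m)), Sum.inl m' => (s a : ℂ) * (if m = m' then 1 else 0)
    | Sum.inr (Sum.inr (Sum.inl p)), Sum.inr (Sum.inl q) => if p = q then 1 else 0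
    | Sum.inr (Sum.inr (Sum.inr t)), Sum.inr (Sum.inr t')  => if t = t' then 1 else 0
    | _, _ => 0

/-! The embedding `J(s) : (x, v, w) ↦ (0, s_a x, v, w)` is an isometry when `s` is a unit vector,
and it intertwines the principal symbols, `P₂(s) J(s) = J(s) P₃(s)`: since the `u`-slot of
`J(s)` is zero, the parameters `D^u, D, D^v, D^w` never enter, and every `D̄` appears contracted
with `s` in the two indices in which it is antisymmetric, so it drops out. Compressing a
symmetrizer of `P₂(s)` by an isometric intertwiner gives a symmetrizer of `P₃(s)` with the same
bounds. -/

section Antisymm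

variable {ι R : Type*} [Fintype ι] [CommRing R] [IsAddTorsionFree R]

theorem Finset.sum_sum_mul_mul_eq_zero_of_antisymm (s : ι → R) (f : ι → ι → R)
    (hf : ∀ i j, f i j = -f j i) : ∑ j, (∑ i, s i * f i j) * s j = 0 := by
  refine self_eq_neg.mp ?_
  simp only [Finset.sum_mul, ← Finset.sum_neg_distrib]
  rw [Finset.sum_comm]
  exact Finset.sum_congr rfl fun i _ => Finset.sum_congr rfl fun j _ => by rw [hf]; ring

theorem Finset.sum_sum_mul_add_mul_eq_of_antisymm (s : ι → R) (f g : ι → ι → R)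
    (hg : ∀ i j, g i j = -g j i) :
    ∑ j, (∑ i, s i * (f i j + g i j)) * s j = ∑ i, ∑ j, s i * s j * f i j := by
  simp only [mul_add, Finset.sum_add_distrib, add_mul]
  rw [Finset.sum_sum_mul_mul_eq_zero_of_antisymm s g hg, add_zero]
  simp only [Finset.sum_mul]
  rw [Finset.sum_comm]
  exact Finset.sum_congr rfl fun i _ => Finset.sum_congr rfl fun j _ => by ring

end Antisymm

section Compression

variable {m n : Type*} [Fintype n]

theorem loewnerLE.conjTranspose_mul_mul [Fintype m] {A B : Matrix n n ℂ} (h : loewnerLE A B)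
    (J : Matrix n m ℂ) : loewnerLE (Jᴴ * A * J) (Jᴴ * B * J) := by
  unfold loewnerLE at *
  simpa only [Matrix.mul_sub, Matrix.sub_mul] using h.conjTranspose_mul_mul_same J

variable [DecidableEq m] [DecidableEq n]

theorem Matrix.conjTranspose_mul_smul_one_mul_of_isometry {J : Matrix n m ℂ} (hJ : Jᴴ * J = 1)
    (c : ℂ) : Jᴴ * (c • (1 : Matrix n n ℂ)) * J = c • 1 := by
  rw [Matrix.mul_smul, Matrix.mul_one, Matrix.smul_mul, hJ]

variable [Fintype m]

def IsSymmetrizer (M : ℝ) (P H : Matrix n n ℂ) : Prop :=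
  H.IsHermitian ∧ H * P = Pᴴ * H ∧
    loewnerLE (((M⁻¹ : ℝ) : ℂ) • 1) H ∧ loewnerLE H (((M : ℝ) : ℂ) • 1)

theorem IsSymmetrizer.compress {M : ℝ} {P H : Matrix n n ℂ} {Q : Matrix m m ℂ}
    {J : Matrix n m ℂ} (h : IsSymmetrizer M P H) (hJ : Jᴴ * J = 1) (hPJ : P * J = J * Q) :
    IsSymmetrizer M Q (Jᴴ * H * J) := by
  obtain ⟨hHerm, hsymm, hlower, hupper⟩ := h
  refine ⟨isHermitian_conjTranspose_mul_mul J hHerm, ?_, ?_, ?_⟩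
  · calc Jᴴ * H * J * Q = Jᴴ * (H * P) * J := by simp only [Matrix.mul_assoc, hPJ]
      _ = (P * J)ᴴ * H * J := by simp only [hsymm, conjTranspose_mul, Matrix.mul_assoc]
      _ = Qᴴ * (Jᴴ * H * J) := by simp only [hPJ, conjTranspose_mul, Matrix.mul_assoc]
  · simpa only [Matrix.conjTranspose_mul_smul_one_mul_of_isometry hJ] using
      hlower.conjTranspose_mul_mul J
  · simpa only [Matrix.conjTranspose_mul_smul_one_mul_of_isometry hJ] using
      hupper.conjTranspose_mul_mul J

end Compression

local notation "𝒥" => Jcomp (nu := nu) (nv := nv) (nw := nw)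

section Jcomp

variable {ι : Type*} (s : Fin 3 → ℝ)

@[simp]
theorem mul_Jcomp_apply_inl (A : Matrix ι (I2 nu nv nw) ℂ) (r : ι) (m : Fin nu) :
    (A * 𝒥 s) r (Sum.inl m) = ∑ a, A r (Sum.inr (Sum.inl (a, m))) * s a := by
  simp [Jcomp, Matrix.mul_apply, Fintype.sum_sum_type, Fintype.sum_prod_type]

@[simp]
theorem mul_Jcomp_apply_inr (A : Matrix ι (I2 nu nv nw) ℂ) (r : ι) (x : Fin nv ⊕ Fin nw) :
    (A * 𝒥 s) r (Sum.inr x) = A r (Sum.inr (Sum.inr x)) := by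
  rcases x with p | t <;> simp [Jcomp, Matrix.mul_apply, Fintype.sum_sum_type]

@[simp]
theorem Jcomp_mul_apply_inl (B : Matrix (I3 nu nv nw) ι ℂ) (m : Fin nu) (c : ι) :
    (𝒥 s * B) (Sum.inl m) c = 0 := by
  simp [Jcomp, Matrix.mul_apply]

@[simp]
theorem Jcomp_mul_apply_inr_inl (B : Matrix (I3 nu nv nw) ι ℂ) (a : Fin 3) (m : Fin nu)
    (c : ι) : (𝒥 s * B) (Sum.inr (Sum.inl (a, m))) c = s a * B (Sum.inl m) c := by
  simp [Jcomp, Matrix.mul_apply, Fintype.sum_sum_type]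

@[simp]
theorem Jcomp_mul_apply_inr_inr (B : Matrix (I3 nu nv nw) ι ℂ) (x : Fin nv ⊕ Fin nw)
    (c : ι) : (𝒥 s * B) (Sum.inr (Sum.inr x)) c = B (Sum.inr x) c := by
  rcases x with p | t <;> simp [Jcomp, Matrix.mul_apply, Fintype.sum_sum_type]

theorem conjTranspose_Jcomp_mul_Jcomp (hs : ∑ i, s i ^ 2 = 1) : (𝒥 s)ᴴ * 𝒥 s = 1 := by
  have hs' : ∑ i, (s i : ℂ) * s i = 1 := by exact_mod_cast (by simpa [sq] using hs)
  ext r c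
  rcases r with m | p | t <;> rcases c with m' | p' | t' <;>
    simp only [mul_Jcomp_apply_inl, mul_Jcomp_apply_inr, conjTranspose_apply] <;>
    simp [Jcomp, Matrix.one_apply, apply_ite (starRingEnd ℂ), ite_mul, Finset.sum_ite_irrel, hs',
      eq_comm]

theorem P2_mul_Jcomp (hDbaru : ∀ i a, Dbaru i a = -Dbaru a i)
    (hDbar : ∀ a k b, Dbar a k b = -Dbar a b k) (hDbarv : ∀ i a, Dbarv i a = -Dbarv a i)
    (hDbarw : ∀ k j a, Dbarw k j a = -Dbarw k a j) :
    P2 Auu Auv Bu1u Avu Avv Avw Bv1u Awu Awv Aww Bw1u Du Dbaru DD Dbar Dv Dbarv Dw Dbarw s * 𝒥 s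
      = 𝒥 s * P3 Auu Auv Avu Avv Avw Awu Awv Aww s := by
  ext r c
  rcases r with m | ⟨a, m⟩ | p | t <;> rcases c with m' | q | t' <;>
    simp only [mul_Jcomp_apply_inl, mul_Jcomp_apply_inr, Jcomp_mul_apply_inl,
      Jcomp_mul_apply_inr_inl, Jcomp_mul_apply_inr_inr] <;>
    simp only [P2, P3, Matrix.of_apply, Matrix.add_apply, mul_zero]
  case inl.inl =>
    exact Finset.sum_sum_mul_mul_eq_zero_of_antisymm _ _ fun i j => by simp [hDbaru i j]
  case inr.inl.inl =>
    rw [Finset.sum_sum_mul_add_mul_eq_of_antisymm _ _ _ fun i j => by simp [hDbar a i j]]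
    simp [Matrix.ite_apply, Finset.mul_sum, mul_assoc]
  case inr.inr.inl.inl =>
    exact Finset.sum_sum_mul_add_mul_eq_of_antisymm _ _ _ fun i j => by simp [hDbarv i j]
  case inr.inr.inr.inl =>
    calc _ = ∑ i, (s i : ℂ) * ∑ a, (∑ j, (s j : ℂ) * (Awu i j a t m' + Dbarw i j a t m')) * s a := by
          simp only [Finset.mul_sum, Finset.sum_mul]
          rw [Finset.sum_comm]
          exact Finset.sum_congr rfl fun i _ => Finset.sum_congr rfl fun a _ =>
            Finset.sum_congr rfl fun j _ => by ring
      _ = _ := Finset.sum_congr rfl fun i _ => by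
          rw [Finset.sum_sum_mul_add_mul_eq_of_antisymm _ _ _ fun j b => by simp [hDbarw i j b],
            Finset.mul_sum]
          refine Finset.sum_congr rfl fun j _ => ?_
          rw [Finset.mul_sum]
          exact Finset.sum_congr rfl fun k _ => by ring

end Jcomp

theorem IsSymmetrizer.P3_of_P2 (hDbaru : ∀ i a, Dbaru i a = -Dbaru a i)
    (hDbar : ∀ a k b, Dbar a k b = -Dbar a b k) (hDbarv : ∀ i a, Dbarv i a = -Dbarv a i)
    (hDbarw : ∀ k j a, Dbarw k j a = -Dbarw k a j) {M : ℝ} {H : Matrix (I2 nu nv nw) (I2 nu nv nw) ℂ}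
    {s : Fin 3 → ℝ} (hs : ∑ i, s i ^ 2 = 1)
    (h : IsSymmetrizer M
      (P2 Auu Auv Bu1u Avu Avv Avw Bv1u Awu Awv Aww Bw1u Du Dbaru DD Dbar Dv Dbarv Dw Dbarw s) H) :
    IsSymmetrizer M (P3 Auu Auv Avu Avv Avw Awu Awv Aww s) ((𝒥 s)ᴴ * H * 𝒥 s) :=
  h.compress (conjTranspose_Jcomp_mul_Jcomp s hs)
    (P2_mul_Jcomp Auu Auv Bu1u Avu Avv Avw Bv1u Awu Awv Aww Bw1u Du Dbaru DD Dbar Dv Dbarv Dw Dbarw s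
      hDbaru hDbar hDbarv hDbarw)

/-- FT2S strong hyperbolicity implies FT3S strong hyperbolicity.  If for
some choice of reduction parameters there are `M₂ > 0` and Hermitian `H₂(s)` with
`H₂(s)P₂(s) = P₂(s)ᴴH₂(s)` and `M₂⁻¹ I ≤ H₂(s) ≤ M₂ I` for every unit `s`, then the same
holds at third order; one may take `M₃ = M₂` and `H₃(s)` the diagonal block of `H₂(s)`
corresponding to `(s^a d_a, v, w)`. -/
theorem stmt_0
    (hDbaru : ∀ i a, Dbaru i a = -Dbaru a i)
    (hDbar : ∀ a k b, Dbar a k b = -Dbar a b k)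
    (hDbarv : ∀ i a, Dbarv i a = -Dbarv a i)
    (hDbarw : ∀ k j a, Dbarw k j a = -Dbarw k a j)
    (M2 : ℝ) (hM2 : 0 < M2)
    (H2 : (Fin 3 → ℝ) → Matrix (I2 nu nv nw) (I2 nu nv nw) ℂ)
    (hH2 : ∀ s : Fin 3 → ℝ, (∑ i, s i ^ 2) = 1 →
      (H2 s).IsHermitian ∧
      H2 s * P2 Auu Auv Bu1u Avu Avv Avw Bv1u Awu Awv Aww Bw1u Du Dbaru DD Dbar Dv
          Dbarv Dw Dbarw s
        = (P2 Auu Auv Bu1u Avu Avv Avw Bv1u Awu Awv Aww Bw1u Du Dbaru DD Dbar Dv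
            Dbarv Dw Dbarw s)ᴴ * H2 s ∧
      loewnerLE (((M2⁻¹ : ℝ) : ℂ) • 1) (H2 s) ∧
      loewnerLE (H2 s) (((M2 : ℝ) : ℂ) • 1)) :
    (∃ M3 : ℝ, 0 < M3 ∧ ∀ s : Fin 3 → ℝ, (∑ i, s i ^ 2) = 1 →
      ∃ H3 : Matrix (I3 nu nv nw) (I3 nu nv nw) ℂ,
        H3.IsHermitian ∧
        H3 * P3 Auu Auv Avu Avv Avw Awu Awv Aww s
          = (P3 Auu Auv Avu Avv Avw Awu Awv Aww s)ᴴ * H3 ∧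
        loewnerLE (((M3⁻¹ : ℝ) : ℂ) • 1) H3 ∧
        loewnerLE H3 (((M3 : ℝ) : ℂ) • 1)) ∧
    (∀ s : Fin 3 → ℝ, (∑ i, s i ^ 2) = 1 →
      ((Jcomp (nu := nu) (nv := nv) (nw := nw) s)ᴴ * H2 s * Jcomp (nu := nu) (nv := nv) (nw := nw) s : Matrix (I3 nu nv nw) (I3 nu nv nw) ℂ).IsHermitian ∧
      (Jcomp (nu := nu) (nv := nv) (nw := nw) s)ᴴ * H2 s * Jcomp (nu := nu) (nv := nv) (nw := nw) s * P3 Auu Auv Avu Avv Avw Awu Awv Aww s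
        = (P3 Auu Auv Avu Avv Avw Awu Awv Aww s)ᴴ * ((Jcomp (nu := nu) (nv := nv) (nw := nw) s)ᴴ * H2 s * Jcomp (nu := nu) (nv := nv) (nw := nw) s) ∧
      loewnerLE (((M2⁻¹ : ℝ) : ℂ) • 1) ((Jcomp (nu := nu) (nv := nv) (nw := nw) s)ᴴ * H2 s * Jcomp (nu := nu) (nv := nv) (nw := nw) s) ∧
      loewnerLE ((Jcomp (nu := nu) (nv := nv) (nw := nw) s)ᴴ * H2 s * Jcomp (nu := nu) (nv := nv) (nw := nw) s) (((M2 : ℝ) : ℂ) • 1)) := by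
  have key : ∀ s : Fin 3 → ℝ, ∑ i, s i ^ 2 = 1 →
      IsSymmetrizer M2 (P3 Auu Auv Avu Avv Avw Awu Awv Aww s) ((𝒥 s)ᴴ * H2 s * 𝒥 s) :=
    fun s hs => IsSymmetrizer.P3_of_P2 Auu Auv Bu1u Avu Avv Avw Bv1u Awu Awv Aww Bw1u Du Dbaru DD
      Dbar Dv Dbarv Dw Dbarw hDbaru hDbar hDbarv hDbarw hs (hH2 s hs)
  exact ⟨⟨M2, hM2, fun s hs => ⟨_, key s hs⟩⟩, key⟩
end

section
/- Let n >= 1 and let V^{pijkl} (indices p,i,j,k,l in {1,2,3}) be complex n x n matrices satisfying: (i) V^{pijkl} = V^{p(ij)(kl)} (V is symmetric in the pair (i,j) and in the pair (k,l)); (ii) (V^{pijkl})* = -V^{pklij}; (iii) the total symmetrization over all five indices vanishes, V^{(pijkl)} = 0. Then there exist complex n x n matrices J^{pijkl} such that J^{pijkl} = J^{p(ij)(kl)}, the total symmetrization of J over the three indices (p,k,l) with (i,j) held fixed vanishes (J^{(p|ij|kl)} = 0), and J^{pijkl} - (J^{pklij})* = -V^{pijkl} for all indices. -/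
open Matrix

private lemma fs1' {n : ℕ} : (1 : Fin (n+2)) = (0 : Fin (n+1)).succ := rfl
private lemma fs2' {n : ℕ} : (2 : Fin (n+3)) = (1 : Fin (n+2)).succ := rfl
private lemma fs3' {n : ℕ} : (3 : Fin (n+4)) = (2 : Fin (n+3)).succ := rfl
private lemma fs4' {n : ℕ} : (4 : Fin (n+5)) = (3 : Fin (n+4)).succ := rfl

set_option maxHeartbeats 4000000 in
set_option maxRecDepth 100000 in
private lemma perm5_expand {M : Type*} [AddCommGroup M]
    (g : Fin 5 → Fin 5 → Fin 5 → Fin 5 → Fin 5 → M) :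
    ∑ σ : Equiv.Perm (Fin 5), g (σ 0) (σ 1) (σ 2) (σ 3) (σ 4) =
      g 0 1 2 3 4 +
      g 0 1 2 4 3 +
      g 0 1 3 2 4 +
      g 0 1 3 4 2 +
      g 0 1 4 2 3 +
      g 0 1 4 3 2 +
      g 0 2 1 3 4 +
      g 0 2 1 4 3 +
      g 0 2 3 1 4 +
      g 0 2 3 4 1 +
      g 0 2 4 1 3 +
      g 0 2 4 3 1 +
      g 0 3 1 2 4 +
      g 0 3 1 4 2 +
      g 0 3 2 1 4 +
      g 0 3 2 4 1 +
      g 0 3 4 1 2 +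
      g 0 3 4 2 1 +
      g 0 4 1 2 3 +
      g 0 4 1 3 2 +
      g 0 4 2 1 3 +
      g 0 4 2 3 1 +
      g 0 4 3 1 2 +
      g 0 4 3 2 1 +
      g 1 0 2 3 4 +
      g 1 0 2 4 3 +
      g 1 0 3 2 4 +
      g 1 0 3 4 2 +
      g 1 0 4 2 3 +
      g 1 0 4 3 2 +
      g 1 2 0 3 4 +
      g 1 2 0 4 3 +
      g 1 2 3 0 4 +
      g 1 2 3 4 0 +
      g 1 2 4 0 3 +
      g 1 2 4 3 0 +
      g 1 3 0 2 4 +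
      g 1 3 0 4 2 +
      g 1 3 2 0 4 +
      g 1 3 2 4 0 +
      g 1 3 4 0 2 +
      g 1 3 4 2 0 +
      g 1 4 0 2 3 +
      g 1 4 0 3 2 +
      g 1 4 2 0 3 +
      g 1 4 2 3 0 +
      g 1 4 3 0 2 +
      g 1 4 3 2 0 +
      g 2 0 1 3 4 +
      g 2 0 1 4 3 +
      g 2 0 3 1 4 +
      g 2 0 3 4 1 +
      g 2 0 4 1 3 +
      g 2 0 4 3 1 +
      g 2 1 0 3 4 +
      g 2 1 0 4 3 +
      g 2 1 3 0 4 +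
      g 2 1 3 4 0 +
      g 2 1 4 0 3 +
      g 2 1 4 3 0 +
      g 2 3 0 1 4 +
      g 2 3 0 4 1 +
      g 2 3 1 0 4 +
      g 2 3 1 4 0 +
      g 2 3 4 0 1 +
      g 2 3 4 1 0 +
      g 2 4 0 1 3 +
      g 2 4 0 3 1 +
      g 2 4 1 0 3 +
      g 2 4 1 3 0 +
      g 2 4 3 0 1 +
      g 2 4 3 1 0 +
      g 3 0 1 2 4 +
      g 3 0 1 4 2 +
      g 3 0 2 1 4 +
      g 3 0 2 4 1 +
      g 3 0 4 1 2 +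
      g 3 0 4 2 1 +
      g 3 1 0 2 4 +
      g 3 1 0 4 2 +
      g 3 1 2 0 4 +
      g 3 1 2 4 0 +
      g 3 1 4 0 2 +
      g 3 1 4 2 0 +
      g 3 2 0 1 4 +
      g 3 2 0 4 1 +
      g 3 2 1 0 4 +
      g 3 2 1 4 0 +
      g 3 2 4 0 1 +
      g 3 2 4 1 0 +
      g 3 4 0 1 2 +
      g 3 4 0 2 1 +
      g 3 4 1 0 2 +
      g 3 4 1 2 0 +
      g 3 4 2 0 1 +
      g 3 4 2 1 0 +
      g 4 0 1 2 3 +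
      g 4 0 1 3 2 +
      g 4 0 2 1 3 +
      g 4 0 2 3 1 +
      g 4 0 3 1 2 +
      g 4 0 3 2 1 +
      g 4 1 0 2 3 +
      g 4 1 0 3 2 +
      g 4 1 2 0 3 +
      g 4 1 2 3 0 +
      g 4 1 3 0 2 +
      g 4 1 3 2 0 +
      g 4 2 0 1 3 +
      g 4 2 0 3 1 +
      g 4 2 1 0 3 +
      g 4 2 1 3 0 +
      g 4 2 3 0 1 +
      g 4 2 3 1 0 +
      g 4 3 0 1 2 +
      g 4 3 0 2 1 +
      g 4 3 1 0 2 +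
      g 4 3 1 2 0 +
      g 4 3 2 0 1 +
      g 4 3 2 1 0 := by
  rw [← Equiv.sum_comp (Equiv.Perm.decomposeFin.symm)]
  simp only [Fintype.sum_prod_type, Fin.sum_univ_succ, Finset.univ_unique, Finset.sum_singleton,
    Fin.sum_univ_zero, ← Equiv.sum_comp (Equiv.Perm.decomposeFin.symm)]
  simp only [fs1', fs2', fs3', fs4', Equiv.Perm.decomposeFin_symm_apply_zero,
    Equiv.Perm.decomposeFin_symm_apply_succ]
  norm_num [Equiv.swap_apply_def, Fin.ext_iff]
  abel

set_option maxHeartbeats 4000000 in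
set_option maxRecDepth 100000 in
/-- construction of the flux correction `J` from `V`.  If the complex
`n × n` matrices `V^{pijkl}` (indices in `{1,2,3}`) are symmetric in the pair `(i,j)` and
in the pair `(k,l)`, satisfy `(V^{pijkl})* = -V^{pklij}`, and have vanishing total
symmetrization over all five indices, then there exist matrices `J^{pijkl}`, symmetric in
`(i,j)` and in `(k,l)`, whose symmetrization over the three indices `(p,k,l)` (holding
`(i,j)` fixed) vanishes, such that `J^{pijkl} - (J^{pklij})* = -V^{pijkl}`. -/
theorem stmt_16 {n : ℕ} (hn : 1 ≤ n)
    (V : Fin 3 → Fin 3 → Fin 3 → Fin 3 → Fin 3 → Matrix (Fin n) (Fin n) ℂ)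
    (hsym₁ : ∀ p i j k l, V p i j k l = V p j i k l)
    (hsym₂ : ∀ p i j k l, V p i j k l = V p i j l k)
    (hstar : ∀ p i j k l, (V p i j k l)ᴴ = -V p k l i j)
    (htot : ∀ f : Fin 5 → Fin 3,
      ∑ σ : Equiv.Perm (Fin 5), V (f (σ 0)) (f (σ 1)) (f (σ 2)) (f (σ 3)) (f (σ 4)) = 0) :
    ∃ J : Fin 3 → Fin 3 → Fin 3 → Fin 3 → Fin 3 → Matrix (Fin n) (Fin n) ℂ,
      (∀ p i j k l, J p i j k l = J p j i k l) ∧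
      (∀ p i j k l, J p i j k l = J p i j l k) ∧
      (∀ p i j k l,
        J p i j k l + J p i j l k + J k i j p l + J k i j l p + J l i j p k + J l i j k p
          = 0) ∧
      (∀ p i j k l, J p i j k l - (J p k l i j)ᴴ = -V p i j k l) := by
  have R30 : ∀ p i j k l : Fin 3,
      V p i j k l +
        V p i j l k +
        V p i k j l +
        V p i k l j +
        V p i l j k +
        V p i l k j +
        V p j i k l +
        V p j i l k +
        V p j k i l +
        V p j k l i +
        V p j l i k +
        V p j l k i +
        V p k i j l +
        V p k i l j +
        V p k j i l +
        V p k j l i +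
        V p k l i j +
        V p k l j i +
        V p l i j k +
        V p l i k j +
        V p l j i k +
        V p l j k i +
        V p l k i j +
        V p l k j i +
        V i p j k l +
        V i p j l k +
        V i p k j l +
        V i p k l j +
        V i p l j k +
        V i p l k j +
        V i j p k l +
        V i j p l k +
        V i j k p l +
        V i j k l p +
        V i j l p k +
        V i j l k p +
        V i k p j l +
        V i k p l j +
        V i k j p l +
        V i k j l p +
        V i k l p j +
        V i k l j p +
        V i l p j k +
        V i l p k j +
        V i l j p k +
        V i l j k p +
        V i l k p j +
        V i l k j p +
        V j p i k l +
        V j p i l k +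
        V j p k i l +
        V j p k l i +
        V j p l i k +
        V j p l k i +
        V j i p k l +
        V j i p l k +
        V j i k p l +
        V j i k l p +
        V j i l p k +
        V j i l k p +
        V j k p i l +
        V j k p l i +
        V j k i p l +
        V j k i l p +
        V j k l p i +
        V j k l i p +
        V j l p i k +
        V j l p k i +
        V j l i p k +
        V j l i k p +
        V j l k p i +
        V j l k i p +
        V k p i j l +
        V k p i l j +
        V k p j i l +
        V k p j l i +
        V k p l i j +
        V k p l j i +
        V k i p j l +
        V k i p l j +
        V k i j p l +
        V k i j l p +
        V k i l p j +
        V k i l j p +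
        V k j p i l +
        V k j p l i +
        V k j i p l +
        V k j i l p +
        V k j l p i +
        V k j l i p +
        V k l p i j +
        V k l p j i +
        V k l i p j +
        V k l i j p +
        V k l j p i +
        V k l j i p +
        V l p i j k +
        V l p i k j +
        V l p j i k +
        V l p j k i +
        V l p k i j +
        V l p k j i +
        V l i p j k +
        V l i p k j +
        V l i j p k +
        V l i j k p +
        V l i k p j +
        V l i k j p +
        V l j p i k +
        V l j p k i +
        V l j i p k +
        V l j i k p +
        V l j k p i +
        V l j k i p +
        V l k p i j +
        V l k p j i +
        V l k i p j +
        V l k i j p +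
        V l k j p i +
        V l k j i p = 0 := by
    intro p i j k l
    have h := perm5_expand (g := fun a b c d e =>
      V (![p, i, j, k, l] a) (![p, i, j, k, l] b) (![p, i, j, k, l] c) (![p, i, j, k, l] d)
        (![p, i, j, k, l] e))
    beta_reduce at h
    rw [htot ![p, i, j, k, l]] at h
    simpa only [fs1', fs2', fs3', fs4', Matrix.cons_val_succ, Matrix.cons_val_zero] using h.symm
  refine ⟨fun p i j k l =>
      ((-1 : ℝ)/8) • V p i j k l +
      ((-1 : ℝ)/8) • V p i j l k +
      ((-1 : ℝ)/8) • V p j i k l +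
      ((-1 : ℝ)/8) • V p j i l k +
      ((-9 : ℝ)/160) • V i p j k l +
      ((-9 : ℝ)/160) • V i p j l k +
      ((-3 : ℝ)/320) • V i p k j l +
      ((-3 : ℝ)/320) • V i p k l j +
      ((-3 : ℝ)/320) • V i p l j k +
      ((-3 : ℝ)/320) • V i p l k j +
      ((-9 : ℝ)/160) • V i j p k l +
      ((-9 : ℝ)/160) • V i j p l k +
      ((7 : ℝ)/320) • V i j k p l +
      ((7 : ℝ)/320) • V i j k l p +
      ((7 : ℝ)/320) • V i j l p k +
      ((7 : ℝ)/320) • V i j l k p +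
      ((-3 : ℝ)/320) • V i k p j l +
      ((-3 : ℝ)/320) • V i k p l j +
      ((7 : ℝ)/320) • V i k j p l +
      ((7 : ℝ)/320) • V i k j l p +
      ((1 : ℝ)/160) • V i k l p j +
      ((1 : ℝ)/160) • V i k l j p +
      ((-3 : ℝ)/320) • V i l p j k +
      ((-3 : ℝ)/320) • V i l p k j +
      ((7 : ℝ)/320) • V i l j p k +
      ((7 : ℝ)/320) • V i l j k p +
      ((1 : ℝ)/160) • V i l k p j +
      ((1 : ℝ)/160) • V i l k j p +
      ((-9 : ℝ)/160) • V j p i k l +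
      ((-9 : ℝ)/160) • V j p i l k +
      ((-3 : ℝ)/320) • V j p k i l +
      ((-3 : ℝ)/320) • V j p k l i +
      ((-3 : ℝ)/320) • V j p l i k +
      ((-3 : ℝ)/320) • V j p l k i +
      ((-9 : ℝ)/160) • V j i p k l +
      ((-9 : ℝ)/160) • V j i p l k +
      ((7 : ℝ)/320) • V j i k p l +
      ((7 : ℝ)/320) • V j i k l p +
      ((7 : ℝ)/320) • V j i l p k +
      ((7 : ℝ)/320) • V j i l k p +
      ((-3 : ℝ)/320) • V j k p i l +
      ((-3 : ℝ)/320) • V j k p l i +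
      ((7 : ℝ)/320) • V j k i p l +
      ((7 : ℝ)/320) • V j k i l p +
      ((1 : ℝ)/160) • V j k l p i +
      ((1 : ℝ)/160) • V j k l i p +
      ((-3 : ℝ)/320) • V j l p i k +
      ((-3 : ℝ)/320) • V j l p k i +
      ((7 : ℝ)/320) • V j l i p k +
      ((7 : ℝ)/320) • V j l i k p +
      ((1 : ℝ)/160) • V j l k p i +
      ((1 : ℝ)/160) • V j l k i p +
      ((-7 : ℝ)/320) • V k p i j l +
      ((-7 : ℝ)/320) • V k p i l j +
      ((-7 : ℝ)/320) • V k p j i l +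
      ((-7 : ℝ)/320) • V k p j l i +
      ((-1 : ℝ)/160) • V k p l i j +
      ((-1 : ℝ)/160) • V k p l j i +
      ((-7 : ℝ)/320) • V k i p j l +
      ((-7 : ℝ)/320) • V k i p l j +
      ((9 : ℝ)/160) • V k i j p l +
      ((9 : ℝ)/160) • V k i j l p +
      ((3 : ℝ)/320) • V k i l p j +
      ((3 : ℝ)/320) • V k i l j p +
      ((-7 : ℝ)/320) • V k j p i l +
      ((-7 : ℝ)/320) • V k j p l i +
      ((9 : ℝ)/160) • V k j i p l +
      ((9 : ℝ)/160) • V k j i l p +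
      ((3 : ℝ)/320) • V k j l p i +
      ((3 : ℝ)/320) • V k j l i p +
      ((-1 : ℝ)/160) • V k l p i j +
      ((-1 : ℝ)/160) • V k l p j i +
      ((3 : ℝ)/320) • V k l i p j +
      ((3 : ℝ)/320) • V k l i j p +
      ((3 : ℝ)/320) • V k l j p i +
      ((3 : ℝ)/320) • V k l j i p +
      ((-7 : ℝ)/320) • V l p i j k +
      ((-7 : ℝ)/320) • V l p i k j +
      ((-7 : ℝ)/320) • V l p j i k +
      ((-7 : ℝ)/320) • V l p j k i +
      ((-1 : ℝ)/160) • V l p k i j +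
      ((-1 : ℝ)/160) • V l p k j i +
      ((-7 : ℝ)/320) • V l i p j k +
      ((-7 : ℝ)/320) • V l i p k j +
      ((9 : ℝ)/160) • V l i j p k +
      ((9 : ℝ)/160) • V l i j k p +
      ((3 : ℝ)/320) • V l i k p j +
      ((3 : ℝ)/320) • V l i k j p +
      ((-7 : ℝ)/320) • V l j p i k +
      ((-7 : ℝ)/320) • V l j p k i +
      ((9 : ℝ)/160) • V l j i p k +
      ((9 : ℝ)/160) • V l j i k p +
      ((3 : ℝ)/320) • V l j k p i +
      ((3 : ℝ)/320) • V l j k i p +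
      ((-1 : ℝ)/160) • V l k p i j +
      ((-1 : ℝ)/160) • V l k p j i +
      ((3 : ℝ)/320) • V l k i p j +
      ((3 : ℝ)/320) • V l k i j p +
      ((3 : ℝ)/320) • V l k j p i +
      ((3 : ℝ)/320) • V l k j i p,
    fun p i j k l => by beta_reduce; module,
    fun p i j k l => by beta_reduce; module,
    fun p i j k l => by
      beta_reduce
      linear_combination (norm := module) ((-1)/40 : ℝ) • R30 p i j k l,
    fun p i j k l => by
      beta_reduce
      simp only [Matrix.conjTranspose_add, Matrix.conjTranspose_smul, star_trivial, hstar,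
        smul_neg]
      linear_combination (norm := module) (1/2 : ℝ) • hsym₁ p i j k l +
        (1/4 : ℝ) • hsym₂ p i j k l + (1/4 : ℝ) • hsym₂ p j i k l⟩
end

section
/- Let N >= 2, let v : R^3 -> C^n be smooth, set d_0 := v, and for nu = 1,...,N-1 let (d_nu)_{i_1...i_nu} be smooth totally symmetric C^n-valued tensor fields on R^3. Define for nu = 1,...,N-1 the totally symmetric fields (c_nu)_{i_1...i_nu} := d_{(i_1} (d_{nu-1})_{i_2...i_nu)} - (d_nu)_{i_1...i_nu}, and for nu = 1,...,N-2 the fields (cbar_nu)_{i_1...i_{nu+1}} := d_{i_1} (d_nu)_{i_2...i_{nu+1}} - d_{(i_1} (d_nu)_{i_2...i_{nu+1})}. Then for every nu = 1,...,N-1 and all indices: d_{i_1}...d_{i_nu} v = (d_nu)_{i_1...i_nu} + sum over rho from 0 to nu-1 of d_{i_1}...d_{i_rho} (c_{nu-rho})_{i_{rho+1}...i_nu} + sum over rho from 0 to nu-2 of d_{i_1}...d_{i_rho} (cbar_{nu-rho-1})_{i_{rho+1}...i_nu}, where d_{i} denotes the partial derivative, the rho = 0 terms are the undifferentiated constraints,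 and empty sums vanish. -/
/-- The spatial partial derivative `∂ᵢ` of a function on `ℝ³`. -/
noncomputable def pd {E : Type*} [NormedAddCommGroup E] [NormedSpace ℝ E]
    (i : Fin 3) (f : (Fin 3 → ℝ) → E) : (Fin 3 → ℝ) → E :=
  fun x => fderiv ℝ f x (Pi.single i 1)

/-- Iterated spatial partial derivative `∂_{i_1} ⋯ ∂_{i_k}` along the multi-index `m`. -/
noncomputable def pdIter {E : Type*} [NormedAddCommGroup E] [NormedSpace ℝ E] :
    (k : ℕ) → (Fin k → Fin 3) → ((Fin 3 → ℝ) → E) → ((Fin 3 → ℝ) → E)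
  | 0, _, f => f
  | k + 1, m, f => pd (m 0) (pdIter k (fun t => m t.succ) f)

lemma pd_contDiff {E : Type*} [NormedAddCommGroup E] [NormedSpace ℝ E]
    (i : Fin 3) {f : (Fin 3 → ℝ) → E} (hf : ContDiff ℝ (⊤ : ℕ∞) f) : ContDiff ℝ (⊤ : ℕ∞) (pd i f) :=
  (hf.fderiv_right (m := (⊤ : ℕ∞)) le_rfl).clm_apply contDiff_const

lemma pdIter_contDiff {E : Type*} [NormedAddCommGroup E] [NormedSpace ℝ E]
    (k : ℕ) (m : Fin k → Fin 3) {f : (Fin 3 → ℝ) → E} (hf : ContDiff ℝ (⊤ : ℕ∞) f) :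
    ContDiff ℝ (⊤ : ℕ∞) (pdIter k m f) := by
  induction k with
  | zero => exact hf
  | succ k ih => exact pd_contDiff _ (ih _)

lemma pd_add3 {E : Type*} [NormedAddCommGroup E] [NormedSpace ℝ E]
    (i : Fin 3) {f g h : (Fin 3 → ℝ) → E} (hf : Differentiable ℝ f)
    (hg : Differentiable ℝ g) (hh : Differentiable ℝ h) (x : Fin 3 → ℝ) :
    pd i (fun y => f y + g y + h y) x = pd i f x + pd i g x + pd i h x := by
  simp only [pd]
  rw [fderiv_fun_add (f := fun y => f y + g y) ((hf x).add (hg x)) (hh x), fderiv_fun_add (hf x) (hg x)]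
  rfl

lemma pd_sum_apply {E : Type*} [NormedAddCommGroup E] [NormedSpace ℝ E]
    (i : Fin 3) {α : Type*} (s : Finset α) {f : α → (Fin 3 → ℝ) → E}
    (hf : ∀ j ∈ s, Differentiable ℝ (f j)) (x : Fin 3 → ℝ) :
    pd i (fun y => ∑ j ∈ s, f j y) x = ∑ j ∈ s, pd i (f j) x := by
  simp only [pd, fderiv_fun_sum (fun j hj => (hf j hj) x)]
  simp

lemma term_congr {n : ℕ} (F : (ν : ℕ) → (Fin ν → Fin 3) → (Fin 3 → ℝ) → (Fin n → ℂ))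
    {a b p q : ℕ} (hab : a = b) (hpq : p = q)
    (ma : Fin a → Fin 3) (mb : Fin b → Fin 3)
    (hm : ∀ t : Fin a, ma t = mb ⟨↑t, by omega⟩)
    (ja : Fin p → Fin 3) (jb : Fin q → Fin 3)
    (hj : ∀ t : Fin p, ja t = jb ⟨↑t, by omega⟩) (x : Fin 3 → ℝ) :
    pdIter a ma (F p ja) x = pdIter b mb (F q jb) x := by
  subst hab; subst hpq
  rw [show ma = mb from funext fun t => hm t, show ja = jb from funext fun t => hj t]

lemma term_congr' {n : ℕ} (G : (ν : ℕ) → (Fin (ν + 1) → Fin 3) → (Fin 3 → ℝ) → (Fin n → ℂ))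
    {a b p q : ℕ} (hab : a = b) (hpq : p = q)
    (ma : Fin a → Fin 3) (mb : Fin b → Fin 3)
    (hm : ∀ t : Fin a, ma t = mb ⟨↑t, by omega⟩)
    (ja : Fin (p + 1) → Fin 3) (jb : Fin (q + 1) → Fin 3)
    (hj : ∀ t : Fin (p + 1), ja t = jb ⟨↑t, by omega⟩) (x : Fin 3 → ℝ) :
    pdIter a ma (G p ja) x = pdIter b mb (G q jb) x := by
  subst hab; subst hpq
  rw [show ma = mb from funext fun t => hm t, show ja = jb from funext fun t => hj t]

lemma sum_fin_cast {M : Type*} [AddCommMonoid M] {a b : ℕ} (h : a = b) (g : Fin a → M) :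
    ∑ ρ : Fin a, g ρ = ∑ ρ : Fin b, g ⟨ρ.1, by omega⟩ := by
  subst h
  exact Finset.sum_congr rfl fun ρ _ => rfl

set_option maxHeartbeats 2000000 in
/-- lower order derivatives of `v` are the reduction variables plus linear
combinations of the auxiliary constraints and their derivatives.  Here `d 0 = v` (no
indices), `d ν` are the totally symmetric reduction variables, `c ν` and `cbar ν` are the
auxiliary constraints, and for `1 ≤ ν ≤ N-1`,
`∂_{i_1}⋯∂_{i_ν} v = d_ν + ∑_{ρ=0}^{ν-1} ∂^ρ c_{ν-ρ} + ∑_{ρ=0}^{ν-2} ∂^ρ c̄_{ν-ρ-1}`. -/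
theorem stmt_17 {n : ℕ} (N : ℕ) (hN : 2 ≤ N)
    (d : (ν : ℕ) → (Fin ν → Fin 3) → (Fin 3 → ℝ) → (Fin n → ℂ))
    (hsmooth : ∀ ν, ν ≤ N - 1 → ∀ i, ContDiff ℝ (⊤ : ℕ∞) (d ν i))
    (hdsym : ∀ ν, ν ≤ N - 1 → ∀ (i : Fin ν → Fin 3) (σ : Equiv.Perm (Fin ν)),
      d ν (i ∘ σ) = d ν i)
    (c : (ν : ℕ) → (Fin ν → Fin 3) → (Fin 3 → ℝ) → (Fin n → ℂ))
    (hc : ∀ (ν : ℕ) (hν1 : 1 ≤ ν) (hν2 : ν ≤ N - 1) (i : Fin ν → Fin 3) (x : Fin 3 → ℝ),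
      c ν i x =
        ((Nat.factorial ν : ℂ))⁻¹ •
            (∑ σ : Equiv.Perm (Fin ν),
              pd (i (σ ⟨0, by omega⟩))
                (d (ν - 1) (fun t => i (σ ⟨(t : ℕ) + 1, by
                  have := t.isLt; omega⟩))) x)
          - d ν i x)
    (cbar : (ν : ℕ) → (Fin (ν + 1) → Fin 3) → (Fin 3 → ℝ) → (Fin n → ℂ))
    (hcbar : ∀ (ν : ℕ) (hν1 : 1 ≤ ν) (hν2 : ν ≤ N - 2) (i : Fin (ν + 1) → Fin 3)
        (x : Fin 3 → ℝ),
      cbar ν i x =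
        pd (i 0) (d ν (fun t => i t.succ)) x
          - ((Nat.factorial (ν + 1) : ℂ))⁻¹ •
              (∑ σ : Equiv.Perm (Fin (ν + 1)),
                pd (i (σ 0)) (d ν (fun t => i (σ t.succ))) x)) :
    ∀ (ν : ℕ) (hν1 : 1 ≤ ν) (hν2 : ν ≤ N - 1) (i : Fin ν → Fin 3) (x : Fin 3 → ℝ),
      pdIter ν i (d 0 Fin.elim0) x =
        d ν i x
          + (∑ ρ : Fin ν,
              pdIter (ρ : ℕ) (fun t => i ⟨(t : ℕ), t.isLt.trans ρ.isLt⟩)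
                (c (ν - (ρ : ℕ)) (fun t => i ⟨(ρ : ℕ) + (t : ℕ), by
                  have := t.isLt; have := ρ.isLt; omega⟩)) x)
          + (∑ ρ : Fin (ν - 1),
              pdIter (ρ : ℕ) (fun t => i ⟨(t : ℕ), by
                  have := t.isLt; have := ρ.isLt; omega⟩)
                (cbar (ν - (ρ : ℕ) - 1) (fun t => i ⟨(ρ : ℕ) + (t : ℕ), by
                  have := t.isLt; have := ρ.isLt; omega⟩)) x) := by
  -- smoothness of the constraints
  have hcsmooth : ∀ m, 1 ≤ m → m ≤ N - 1 → ∀ j, ContDiff ℝ (⊤ : ℕ∞) (c m j) := by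
    intro m h1 h2 j
    have hrw := funext (hc m h1 h2 j)
    rw [hrw]
    refine ContDiff.sub ?_ (hsmooth m h2 j)
    refine ContDiff.const_smul _ ?_
    refine ContDiff.sum fun σ _ => ?_
    exact pd_contDiff _ (hsmooth (m - 1) (by omega) _)
  have hcbarsmooth : ∀ m, 1 ≤ m → m ≤ N - 2 → ∀ j, ContDiff ℝ (⊤ : ℕ∞) (cbar m j) := by
    intro m h1 h2 j
    have hrw := funext (hcbar m h1 h2 j)
    rw [hrw]
    refine ContDiff.sub (pd_contDiff _ (hsmooth m (by omega) _)) ?_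
    refine ContDiff.const_smul _ ?_
    refine ContDiff.sum fun σ _ => ?_
    exact pd_contDiff _ (hsmooth m (by omega) _)
  -- the key pointwise identity
  have key : ∀ (ν : ℕ), 1 ≤ ν → ν ≤ N - 2 → ∀ (i : Fin (ν + 1) → Fin 3) (x : Fin 3 → ℝ),
      pd (i 0) (d ν (fun t => i t.succ)) x
        = d (ν + 1) i x + c (ν + 1) i x + cbar ν i x := by
    intro ν h1 h2 i x
    rw [hc (ν + 1) (by omega) (by omega) i x, hcbar ν h1 h2 i x]
    simp only [Fin.mk_zero, Fin.succ]
    have hs : ∀ σ : Equiv.Perm (Fin (ν + 1)),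
        pd (i (σ 0)) (d (ν + 1 - 1)
          (fun t => i (σ ⟨(t : ℕ) + 1, by have := t.isLt; omega⟩))) x
        = pd (i (σ 0)) (d ν
          (fun t => i (σ ⟨(t : ℕ) + 1, by have := t.isLt; omega⟩))) x := fun σ => rfl
    simp only [hs]
    abel
  intro ν hν1
  induction ν, hν1 using Nat.le_induction with
  | base =>
    intro hν2 i x
    simp only [pdIter, Fin.sum_univ_one, show (1:ℕ)-1 = 0 from rfl, Fin.sum_univ_zero,
      Fin.val_zero, Nat.sub_zero, Nat.zero_add, Fin.eta, add_zero]
    rw [hc 1 le_rfl (by omega) i x]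
    have hone : ∀ σ : Equiv.Perm (Fin 1),
        pd (i (σ ⟨0, by omega⟩))
          (d 0 (fun t => i (σ ⟨(t : ℕ) + 1, by have := t.isLt; omega⟩))) x
        = pd (i 0) (d 0 Fin.elim0) x := by
      intro σ
      have h1 : σ ⟨0, by omega⟩ = 0 := Subsingleton.elim _ _
      rw [h1]
      exact congrArg (fun g => pd (i 0) (d 0 g) x)
        (funext fun t => absurd t.isLt (by omega))
    simp only [hone, Finset.sum_const, Finset.card_univ, Fintype.card_perm,
      Fintype.card_fin, Nat.factorial_one, one_smul, Nat.cast_one, inv_one]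
    have hzero : ∀ (g : Fin (1 - 1) → Fin n → ℂ), ∑ ρ : Fin (1 - 1), g ρ = 0 :=
      fun g => Finset.sum_eq_zero fun ρ _ => absurd ρ.isLt (by omega)
    rw [hzero]
    abel
  | succ ν hν ih =>
    intro hν2 i x
    obtain ⟨k, rfl⟩ : ∃ k, ν = k + 1 := ⟨ν - 1, by omega⟩
    rw [show pdIter (k + 1 + 1) i (d 0 Fin.elim0) x
        = pd (i 0) (pdIter (k + 1) (fun t => i t.succ) (d 0 Fin.elim0)) x from rfl]
    have hfun := funext (ih (by omega) (fun t => i t.succ))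
    rw [hfun]
    rw [pd_add3 (i 0) ?hf ?hg ?hh x]
    rw [pd_sum_apply (i 0) Finset.univ ?hA x]
    rw [pd_sum_apply (i 0) Finset.univ ?hB x]
    rw [key (k + 1) (by omega) (by omega) i x]
    · conv_lhs => rw [sum_fin_cast (show k + 1 - 1 = k by omega)]
      conv_rhs => rw [sum_fin_cast (show k + 1 + 1 - 1 = k + 1 by omega),
        Fin.sum_univ_succ (n := k), Fin.sum_univ_succ (n := k + 1)]
      have hT0 : pdIter (((0 : Fin (k + 1 + 1)) : ℕ))
          (fun t => i ⟨↑t, by have := t.2; have := (0 : Fin (k + 1 + 1)).2; omega⟩)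
          (c (k + 1 + 1 - ((0 : Fin (k + 1 + 1)) : ℕ))
            (fun t => i ⟨((0 : Fin (k + 1 + 1)) : ℕ) + ↑t, by
              have := t.2; have := (0 : Fin (k + 1 + 1)).2; omega⟩)) x
          = c (k + 1 + 1) i x := by
        refine Eq.trans (term_congr c (show ((0 : Fin (k + 1 + 1)) : ℕ) = 0 by simp)
          (show k + 1 + 1 - ((0 : Fin (k + 1 + 1)) : ℕ) = k + 1 + 1 by simp)
          _ (fun t : Fin 0 => t.elim0) (fun t => absurd t.2 (by simp))
          _ i (fun t => congrArg i (Fin.ext (by simp))) x) rfl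
      have hS0 : pdIter ((((⟨↑(0 : Fin (k + 1)), by omega⟩ : Fin (k + 1 + 1 - 1))) : ℕ))
          (fun t => i ⟨↑t, by have := t.2; omega⟩)
          (cbar (k + 1 + 1 - (((⟨↑(0 : Fin (k + 1)), by omega⟩ : Fin (k + 1 + 1 - 1))) : ℕ) - 1)
            (fun t => i ⟨(((⟨↑(0 : Fin (k + 1)), by omega⟩ : Fin (k + 1 + 1 - 1))) : ℕ) + ↑t, by
              have := t.2; omega⟩)) x
          = cbar (k + 1) i x := by
        refine Eq.trans (term_congr' cbar
          (show ((((⟨↑(0 : Fin (k + 1)), by omega⟩ : Fin (k + 1 + 1 - 1))) : ℕ)) = 0 by simp)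
          (show k + 1 + 1 - (((⟨↑(0 : Fin (k + 1)), by omega⟩ : Fin (k + 1 + 1 - 1))) : ℕ) - 1
            = k + 1 by simp)
          _ (fun t : Fin 0 => t.elim0) (fun t => absurd t.2 (by simp))
          _ i (fun t => congrArg i (Fin.ext (by simp))) x) rfl
      have hA2 : ∀ ρ : Fin (k + 1),
          pdIter ((ρ.succ : Fin (k + 1 + 1)) : ℕ)
            (fun t : Fin ((ρ.succ : Fin (k + 1 + 1)) : ℕ) =>
              i ⟨↑t, by have := t.2; have := ρ.succ.2; omega⟩)
            (c (k + 1 + 1 - ((ρ.succ : Fin (k + 1 + 1)) : ℕ))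
              (fun t : Fin (k + 1 + 1 - ((ρ.succ : Fin (k + 1 + 1)) : ℕ)) =>
                i ⟨((ρ.succ : Fin (k + 1 + 1)) : ℕ) + ↑t, by
                have := t.2; have := ρ.succ.2; omega⟩)) x
          = pd (i 0) (pdIter (↑ρ)
              (fun t : Fin (↑ρ : ℕ) =>
                i (⟨↑t, by have := t.2; have := ρ.2; omega⟩ : Fin (k + 1)).succ)
              (c (k + 1 - (↑ρ : ℕ))
                (fun t : Fin (k + 1 - (↑ρ : ℕ)) => i (⟨(↑ρ : ℕ) + ↑t, by
                  have := t.2; have := ρ.2; omega⟩ : Fin (k + 1)).succ))) x := by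
        intro ρ
        exact term_congr c
          (show ((ρ.succ : Fin (k + 1 + 1)) : ℕ) = (↑ρ : ℕ) + 1 from rfl)
          (show k + 1 + 1 - ((ρ.succ : Fin (k + 1 + 1)) : ℕ) = k + 1 - (↑ρ : ℕ) by
            have e : ((ρ.succ : Fin (k + 1 + 1)) : ℕ) = ↑ρ + 1 := rfl; omega)
          (fun t : Fin ((ρ.succ : Fin (k + 1 + 1)) : ℕ) =>
            i ⟨↑t, by have := t.2; have := ρ.succ.2; omega⟩)
          (fun t : Fin (↑ρ + 1) => i ⟨↑t, by have := t.2; have := ρ.2; omega⟩)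
          (fun t => congrArg i (Fin.ext (by simp)))
          (fun t : Fin (k + 1 + 1 - ((ρ.succ : Fin (k + 1 + 1)) : ℕ)) =>
            i ⟨((ρ.succ : Fin (k + 1 + 1)) : ℕ) + ↑t, by
              have := t.2; have := ρ.succ.2; omega⟩)
          (fun t : Fin (k + 1 - (↑ρ : ℕ)) =>
              i (⟨(↑ρ : ℕ) + ↑t, by have := t.2; have := ρ.2; omega⟩ : Fin (k + 1)).succ)
          (fun t => congrArg i (Fin.ext (by simp [Fin.val_succ]; omega))) x
      have hB2 : ∀ ρ : Fin k,
          pdIter (((⟨↑(ρ.succ : Fin (k + 1)), by have := ρ.succ.2; omega⟩ :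
              Fin (k + 1 + 1 - 1))) : ℕ)
            (fun t : Fin (((⟨↑(ρ.succ : Fin (k + 1)), by have := ρ.succ.2; omega⟩ :
                Fin (k + 1 + 1 - 1))) : ℕ) => i ⟨↑t, by have := t.2; omega⟩)
            (cbar (k + 1 + 1 - (((⟨↑(ρ.succ : Fin (k + 1)), by have := ρ.succ.2; omega⟩ :
                Fin (k + 1 + 1 - 1))) : ℕ) - 1)
              (fun t : Fin (k + 1 + 1 - (((⟨↑(ρ.succ : Fin (k + 1)), by
                  have := ρ.succ.2; omega⟩ : Fin (k + 1 + 1 - 1))) : ℕ) - 1 + 1) =>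
                i ⟨(((⟨↑(ρ.succ : Fin (k + 1)), by have := ρ.succ.2; omega⟩ :
                  Fin (k + 1 + 1 - 1))) : ℕ) + ↑t, by have := t.2; omega⟩)) x
          = pd (i 0) (pdIter ((⟨↑ρ, by have := ρ.2; omega⟩ : Fin (k + 1 - 1)) : ℕ)
              (fun t : Fin ((⟨↑ρ, by have := ρ.2; omega⟩ : Fin (k + 1 - 1)) : ℕ) =>
                i (⟨↑t, by have := t.2; have := ρ.2; omega⟩ : Fin (k + 1)).succ)
              (cbar (k + 1 - ((⟨↑ρ, by have := ρ.2; omega⟩ : Fin (k + 1 - 1)) : ℕ) - 1)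
                (fun t : Fin (k + 1 - ((⟨↑ρ, by have := ρ.2; omega⟩ : Fin (k + 1 - 1)) : ℕ)
                    - 1 + 1) =>
                  i (⟨((⟨↑ρ, by have := ρ.2; omega⟩ : Fin (k + 1 - 1)) : ℕ) + ↑t, by
                  have := t.2; have := ρ.2; omega⟩ : Fin (k + 1)).succ))) x := by
        intro ρ
        exact term_congr' cbar
          (show (((⟨↑(ρ.succ : Fin (k + 1)), by have := ρ.succ.2; omega⟩ :
              Fin (k + 1 + 1 - 1))) : ℕ) = (↑ρ : ℕ) + 1 from rfl)
          (show k + 1 + 1 - (((⟨↑(ρ.succ : Fin (k + 1)), by have := ρ.succ.2; omega⟩ :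
              Fin (k + 1 + 1 - 1))) : ℕ) - 1 = k + 1 - (↑ρ : ℕ) - 1 by
            have e : (((⟨↑(ρ.succ : Fin (k + 1)), by have := ρ.succ.2; omega⟩ :
              Fin (k + 1 + 1 - 1))) : ℕ) = ↑ρ + 1 := rfl; omega)
          (fun t : Fin (((⟨↑(ρ.succ : Fin (k + 1)), by have := ρ.succ.2; omega⟩ :
              Fin (k + 1 + 1 - 1))) : ℕ) => i ⟨↑t, by have := t.2; omega⟩)
          (fun t : Fin (↑ρ + 1) => i ⟨↑t, by have := t.2; have := ρ.2; omega⟩)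
          (fun t => congrArg i (Fin.ext (by simp)))
          (fun t : Fin (k + 1 + 1 - (((⟨↑(ρ.succ : Fin (k + 1)), by
              have := ρ.succ.2; omega⟩ : Fin (k + 1 + 1 - 1))) : ℕ) - 1 + 1) =>
            i ⟨(((⟨↑(ρ.succ : Fin (k + 1)), by have := ρ.succ.2; omega⟩ :
              Fin (k + 1 + 1 - 1))) : ℕ) + ↑t, by have := t.2; omega⟩)
          (fun t : Fin (k + 1 - (↑ρ : ℕ) - 1 + 1) =>
              i (⟨(↑ρ : ℕ) + ↑t, by have := t.2; have := ρ.2; omega⟩ : Fin (k + 1)).succ)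
          (fun t => congrArg i (Fin.ext (by simp [Fin.val_succ]; omega))) x
      simp only [hT0, hS0, hA2, hB2]
      abel
    case hf => exact (hsmooth (k + 1) (by omega) _).differentiable (by simp)
    case hg =>
      refine Differentiable.fun_sum fun ρ _ => ?_
      exact (pdIter_contDiff _ _ (hcsmooth _ (by have := ρ.2; omega)
        (by have := ρ.2; omega) _)).differentiable (by simp)
    case hh =>
      refine Differentiable.fun_sum fun ρ _ => ?_
      exact (pdIter_contDiff _ _ (hcbarsmooth _ (by have := ρ.2; omega)
        (by have := ρ.2; omega) _)).differentiable (by simp)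
    case hA =>
      intro ρ _
      exact (pdIter_contDiff _ _ (hcsmooth _ (by have := ρ.2; omega)
        (by have := ρ.2; omega) _)).differentiable (by simp)
    case hB =>
      intro ρ _
      exact (pdIter_contDiff _ _ (hcbarsmooth _ (by have := ρ.2; omega)
        (by have := ρ.2; omega) _)).differentiable (by simp)
end

section
/- Let P be an n x n complex matrix. (i) If there exist K > 0 and an invertible matrix T with ||T|| <= K, ||T^{-1}|| <= K and T^{-1} P T a real diagonal matrix, then H := (T T*)^{-1} is Hermitian, satisfies H P = P* H, and K^{-2} I <= H <= K^{2} I. (ii) Conversely, if there exist M > 0 and a Hermitian matrix H with H P = P* H and M^{-1} I <= H <= M I, then there exists an invertible matrix T with ||T|| <= sqrt(M), ||T^{-1}|| <= sqrt(M) and T^{-1} P T a real diagonal matrix; one may take T = H^{-1/2} U where U is a unitary matrix diagonalizing the Hermitian matrix H^{1/2} P H^{-1/2}. -/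
open Matrix
open scoped ComplexOrder

/-- The spectral (ℓ²-operator) norm of a complex matrix. -/
noncomputable def matOpNorm {n : Type*} [Fintype n] [DecidableEq n] (M : Matrix n n ℂ) : ℝ :=
  ‖Matrix.toEuclideanCLM (𝕜 := ℂ) M‖

/-- The positive semidefinite square root of a positive semidefinite matrix
(the definition `Matrix.PosSemidef.sqrt` of the older Mathlib, since removed). -/
noncomputable def Matrix.PosSemidef.sqrt {n : Type*} [Fintype n] [DecidableEq n]
    {A : Matrix n n ℂ} (hA : A.PosSemidef) : Matrix n n ℂ :=
  hA.1.eigenvectorUnitary.1 * diagonal ((↑) ∘ (fun x : ℝ => Real.sqrt x) ∘ hA.1.eigenvalues) *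
    (star hA.1.eigenvectorUnitary : Matrix n n ℂ)

/-!
In a C⋆-algebra `‖a‖² = ‖star a * a‖`, so `‖a‖ ≤ √r` iff `star a * a ≤ r`; since inversion
reverses the order on positive units, also `‖u‖ ≤ √r` iff `r⁻¹ ≤ star u⁻¹ * u⁻¹`. Hence a unit
`T` and its inverse have norm at most `√r` exactly when `H = (T T*)⁻¹ = (T⁻¹)* T⁻¹` lies between
`r⁻¹` and `r`, and `H` symmetrizes `P` exactly when `T⁻¹ P T` is self-adjoint. Conversely, if
`H = S²` with `S = H^{1/2}` symmetrizes `P`, then `S P S⁻¹` is Hermitian; diagonalizing it by a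
unitary `U` gives `T = S⁻¹ U` with `(T⁻¹)* T⁻¹ = S U U* S = H`.
-/

open scoped MatrixOrder Matrix.Norms.L2Operator

namespace CStarAlgebra

variable {A : Type*} [CStarAlgebra A] [PartialOrder A] [StarOrderedRing A]

theorem norm_le_sqrt_iff_star_mul_self_le (a : A) {r : ℝ} (hr : 0 ≤ r) :
    ‖a‖ ≤ √r ↔ star a * a ≤ algebraMap ℝ A r := by
  rw [← norm_le_iff_le_algebraMap _ hr (star_mul_self_nonneg a), CStarRing.norm_star_mul_self,
    Real.le_sqrt (norm_nonneg a) hr, sq]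

theorem norm_le_sqrt_iff_algebraMap_inv_le_star_inv_mul_inv (u : Aˣ) {r : ℝ} (hr : 0 < r) :
    ‖(u : A)‖ ≤ √r ↔ algebraMap ℝ A r⁻¹ ≤ star ↑u⁻¹ * ↑u⁻¹ := by
  let c : Aˣ := Units.map (algebraMap ℝ A : ℝ →* A) (Units.mk0 r hr.ne')
  have hc : 0 ≤ (c : A) := algebraMap_nonneg A hr.le
  rw [← norm_star, norm_le_sqrt_iff_star_mul_self_le _ hr.le, star_star]
  simpa [c, _root_.mul_inv_rev] using
    (CStarAlgebra.inv_le_inv_iff hc (b := u * star u) (mul_star_self_nonneg _)).symm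

theorem norm_le_sqrt_and_norm_inv_le_sqrt_iff (u : Aˣ) {r : ℝ} (hr : 0 < r) :
    ‖(u : A)‖ ≤ √r ∧ ‖(↑u⁻¹ : A)‖ ≤ √r ↔
      algebraMap ℝ A r⁻¹ ≤ star ↑u⁻¹ * ↑u⁻¹ ∧ star ↑u⁻¹ * ↑u⁻¹ ≤ algebraMap ℝ A r :=
  and_congr (norm_le_sqrt_iff_algebraMap_inv_le_star_inv_mul_inv u hr)
    (norm_le_sqrt_iff_star_mul_self_le _ hr.le)

end CStarAlgebra

namespace Units

variable {R : Type*} [Monoid R] [StarMul R]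

theorem star_inv_mul_inv_mul_eq_of_isSelfAdjoint_inv_mul_mul (t : Rˣ) {p : R}
    (h : IsSelfAdjoint (↑t⁻¹ * p * t)) :
    star (↑t⁻¹ : R) * ↑t⁻¹ * p = star p * (star (↑t⁻¹ : R) * ↑t⁻¹) := by
  have hstar : star (t : R) * star (↑t⁻¹ : R) = 1 := by rw [← star_mul, inv_mul, star_one]
  have hp : p = t * (↑t⁻¹ * p * t) * ↑t⁻¹ := by simp [mul_assoc]
  rw [hp, star_mul, star_mul, h.star_eq]
  simp only [mul_assoc, inv_mul_cancel_left]
  rw [← mul_assoc (star (t : R)), hstar, one_mul]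

theorem isSelfAdjoint_mul_mul_inv_of_mul_eq_star_mul (s : Rˣ) (hs : IsSelfAdjoint (s : R))
    {p : R} (h : s * s * p = star p * (s * s)) : IsSelfAdjoint (s * p * ↑s⁻¹) := by
  have hs' : star (↑s⁻¹ : R) = ↑s⁻¹ := (Units.inv_eq_of_mul_eq_one_right <| by
    rw [← hs.star_eq, ← star_mul, inv_mul, star_one]).symm
  rw [IsSelfAdjoint, star_mul, star_mul, hs', hs.star_eq]
  calc (↑s⁻¹ : R) * (star p * s) = ↑s⁻¹ * (star p * (s * s)) * ↑s⁻¹ := by simp [mul_assoc]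
    _ = s * p * ↑s⁻¹ := by rw [← h]; simp [mul_assoc]

end Units

section Matrix

variable {ι : Type*} [Fintype ι]

theorem loewnerLE_iff_le {A B : Matrix ι ι ℂ} : loewnerLE A B ↔ A ≤ B := Iff.rfl

variable [DecidableEq ι]

theorem matOpNorm_eq_norm (A : Matrix ι ι ℂ) : matOpNorm A = ‖A‖ := rfl

theorem Matrix.algebraMap_real_eq_smul_one (r : ℝ) :
    algebraMap ℝ (Matrix ι ι ℂ) r = (r : ℂ) • 1 := by
  rw [Algebra.algebraMap_eq_smul_one, ← Complex.coe_smul]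

theorem Matrix.PosSemidef.sqrt_eq_cfcSqrt {A : Matrix ι ι ℂ} (hA : A.PosSemidef) :
    hA.sqrt = CFC.sqrt A := by
  rw [CFC.sqrt_eq_real_sqrt A hA.nonneg, cfcₙ_eq_cfc, hA.1.cfc_eq, IsHermitian.cfc,
    Unitary.conjStarAlgAut_apply]
  rfl

theorem Matrix.symmetrizer_of_bounded_diagonalization {K : ℝ} (hK : 0 < K) {T P : Matrix ι ι ℂ}
    (hT : IsUnit T) (hTn : matOpNorm T ≤ K) (hTin : matOpNorm T⁻¹ ≤ K) {Λ : ι → ℝ}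
    (hdiag : T⁻¹ * P * T = diagonal fun i => (Λ i : ℂ)) :
    (T * Tᴴ)⁻¹.IsHermitian ∧ (T * Tᴴ)⁻¹ * P = Pᴴ * (T * Tᴴ)⁻¹ ∧
      loewnerLE ((((K ^ 2)⁻¹ : ℝ) : ℂ) • 1) (T * Tᴴ)⁻¹ ∧
      loewnerLE (T * Tᴴ)⁻¹ (((K ^ 2 : ℝ) : ℂ) • 1) := by
  lift T to (Matrix ι ι ℂ)ˣ using hT
  have hH : ((T : Matrix ι ι ℂ) * (T : Matrix ι ι ℂ)ᴴ)⁻¹ =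
      star (↑T⁻¹ : Matrix ι ι ℂ) * (↑T⁻¹ : Matrix ι ι ℂ) := by
    rw [Matrix.mul_inv_rev, ← conjTranspose_nonsing_inv, Matrix.coe_units_inv,
      star_eq_conjTranspose]
  rw [← Matrix.coe_units_inv] at hTin hdiag
  rw [← Real.sqrt_sq hK.le, matOpNorm_eq_norm] at hTn hTin
  obtain ⟨hlow, hup⟩ :=
    (CStarAlgebra.norm_le_sqrt_and_norm_inv_le_sqrt_iff T (by positivity)).1 ⟨hTn, hTin⟩
  rw [hH]
  simp only [loewnerLE_iff_le, ← algebraMap_real_eq_smul_one, ← star_eq_conjTranspose]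
  have hD : IsSelfAdjoint ((↑T⁻¹ : Matrix ι ι ℂ) * P * T) :=
    hdiag ▸ isHermitian_diagonal_iff.2 fun i => Complex.conj_ofReal (Λ i)
  exact ⟨IsSelfAdjoint.star_mul_self _,
    T.star_inv_mul_inv_mul_eq_of_isSelfAdjoint_inv_mul_mul hD, hlow, hup⟩

theorem Matrix.exists_bounded_diagonalization_of_symmetrizer {M : ℝ} (hM : 0 < M)
    {H P : Matrix ι ι ℂ} (hHP : H * P = Pᴴ * H) (hlow : loewnerLE (((M⁻¹ : ℝ) : ℂ) • 1) H)
    (hup : loewnerLE H (((M : ℝ) : ℂ) • 1)) :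
    ∃ T : Matrix ι ι ℂ, IsUnit T ∧ matOpNorm T ≤ √M ∧ matOpNorm T⁻¹ ≤ √M ∧
      (∃ Λ : ι → ℝ, T⁻¹ * P * T = diagonal fun i => (Λ i : ℂ)) ∧
      ∃ (hH : H.PosSemidef) (U : Matrix ι ι ℂ), U ∈ unitaryGroup ι ℂ ∧ T = hH.sqrt⁻¹ * U ∧
        ∃ Λ : ι → ℝ, Uᴴ * (hH.sqrt * P * hH.sqrt⁻¹) * U = diagonal fun i => (Λ i : ℂ) := by
  rw [loewnerLE_iff_le, ← algebraMap_real_eq_smul_one] at hlow hup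
  have hHpos : IsStrictlyPositive H := (isStrictlyPositive_algebraMap (inv_pos.2 hM)).of_le hlow
  have hH : H.PosSemidef := nonneg_iff_posSemidef.1 hHpos.nonneg
  obtain ⟨S, hS⟩ : IsUnit hH.sqrt := by
    rwa [hH.sqrt_eq_cfcSqrt, CFC.isUnit_sqrt_iff_isStrictlyPositive]
  have hSS : (S : Matrix ι ι ℂ) * S = H := by
    rw [hS, hH.sqrt_eq_cfcSqrt, CFC.sqrt_mul_sqrt_self H]
  have hSsa : IsSelfAdjoint (S : Matrix ι ι ℂ) := by
    rw [hS, hH.sqrt_eq_cfcSqrt]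
    exact (CFC.sqrt_nonneg H).isSelfAdjoint
  have hA : ((S : Matrix ι ι ℂ) * P * (↑S⁻¹ : Matrix ι ι ℂ)).IsHermitian :=
    S.isSelfAdjoint_mul_mul_inv_of_mul_eq_star_mul hSsa (by rw [hSS, hHP, star_eq_conjTranspose])
  set U := hA.eigenvectorUnitary
  have hUdiag : star (U : Matrix ι ι ℂ) * ((S : Matrix ι ι ℂ) * P * (↑S⁻¹ : Matrix ι ι ℂ)) * U =
      diagonal fun i => (hA.eigenvalues i : ℂ) := by
    have := hA.conjStarAlgAut_star_eigenvectorUnitary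
    rwa [Unitary.conjStarAlgAut_star_apply] at this
  set T : (Matrix ι ι ℂ)ˣ := S⁻¹ * Unitary.toUnits U
  have hTinv : (↑T⁻¹ : Matrix ι ι ℂ) = star (U : Matrix ι ι ℂ) * S := by simp [T]
  have hT : star (↑T⁻¹ : Matrix ι ι ℂ) * (↑T⁻¹ : Matrix ι ι ℂ) = H := by
    rw [hTinv, star_mul, star_star, hSsa.star_eq, mul_assoc, ← mul_assoc (U : Matrix ι ι ℂ),
      Unitary.mul_star_self_of_mem U.2, one_mul, hSS]
  have hdiag : (↑T⁻¹ : Matrix ι ι ℂ) * P * T = diagonal fun i => (hA.eigenvalues i : ℂ) := by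
    rw [hTinv, ← hUdiag]
    simp [T, mul_assoc]
  obtain ⟨hTn, hTin⟩ :=
    (CStarAlgebra.norm_le_sqrt_and_norm_inv_le_sqrt_iff T hM).2 ⟨hT ▸ hlow, hT ▸ hup⟩
  refine ⟨T, T.isUnit, hTn, ?_, ⟨hA.eigenvalues, ?_⟩, hH, U, U.2, ?_, hA.eigenvalues, ?_⟩
  · rwa [← Matrix.coe_units_inv]
  · rwa [← Matrix.coe_units_inv]
  · rw [← hS, ← Matrix.coe_units_inv]
    rfl
  · rwa [← hS, ← Matrix.coe_units_inv, ← star_eq_conjTranspose]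

end Matrix

/-- equivalence of the symmetrizer and bounded-diagonalization
characterizations of strong hyperbolicity for a single matrix `P`.
(i) From a bounded diagonalizing transformation `T` one obtains the symmetrizer
`H = (T T*)⁻¹` with `K⁻² I ≤ H ≤ K² I`;
(ii) from a symmetrizer `H` with `M⁻¹ I ≤ H ≤ M I` one obtains a diagonalizing `T` with
`‖T‖, ‖T⁻¹‖ ≤ √M`; one may take `T = H^{-1/2} U` with `U` unitary diagonalizing
`H^{1/2} P H^{-1/2}`. -/
theorem stmt_18 {n : ℕ} (P : Matrix (Fin n) (Fin n) ℂ) :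
    (∀ (K : ℝ), 0 < K → ∀ T : Matrix (Fin n) (Fin n) ℂ, IsUnit T →
      matOpNorm T ≤ K → matOpNorm T⁻¹ ≤ K →
      ∀ Λ : Fin n → ℝ, T⁻¹ * P * T = Matrix.diagonal (fun i => (Λ i : ℂ)) →
      ((T * Tᴴ)⁻¹.IsHermitian ∧
        (T * Tᴴ)⁻¹ * P = Pᴴ * (T * Tᴴ)⁻¹ ∧
        loewnerLE ((((K ^ 2)⁻¹ : ℝ) : ℂ) • (1 : Matrix (Fin n) (Fin n) ℂ)) (T * Tᴴ)⁻¹ ∧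
        loewnerLE (T * Tᴴ)⁻¹ (((K ^ 2 : ℝ) : ℂ) • (1 : Matrix (Fin n) (Fin n) ℂ)))) ∧
    (∀ (M : ℝ), 0 < M → ∀ H : Matrix (Fin n) (Fin n) ℂ, H.IsHermitian →
      H * P = Pᴴ * H →
      loewnerLE (((M⁻¹ : ℝ) : ℂ) • (1 : Matrix (Fin n) (Fin n) ℂ)) H →
      loewnerLE H (((M : ℝ) : ℂ) • (1 : Matrix (Fin n) (Fin n) ℂ)) →
      ∃ T : Matrix (Fin n) (Fin n) ℂ, IsUnit T ∧
        matOpNorm T ≤ Real.sqrt M ∧ matOpNorm T⁻¹ ≤ Real.sqrt M ∧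
        (∃ Λ : Fin n → ℝ, T⁻¹ * P * T = Matrix.diagonal (fun i => (Λ i : ℂ))) ∧
        (∃ (hH : H.PosSemidef) (U : Matrix (Fin n) (Fin n) ℂ),
          U ∈ Matrix.unitaryGroup (Fin n) ℂ ∧
          T = hH.sqrt⁻¹ * U ∧
          (∃ Λ : Fin n → ℝ,
            Uᴴ * (hH.sqrt * P * hH.sqrt⁻¹) * U = Matrix.diagonal (fun i => (Λ i : ℂ))))) :=
  ⟨fun _ hK _ hT hTn hTin _ hdiag =>
      Matrix.symmetrizer_of_bounded_diagonalization hK hT hTn hTin hdiag,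
    fun _ hM _ _ hHP hlow hup =>
      Matrix.exists_bounded_diagonalization_of_symmetrizer hM hHP hlow hup⟩
end
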